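/- Let E ∈ 𝒦 and x ∈ E. If {0} ∈ Tan(E,x), then the upper porosity of E at x equals 1/2: limsup_{r→0} por(E,x,r) = 1/2, where por(E,x,r) = sup{α ≥ 0 : there exists y ∈ ℝ^d with B(y, αr) ⊆ B(x,r) \ E}. -/
import Mathlib


open Metric Set Filter Topology

noncomputable section

/-- `d`-dimensional Euclidean space. -/
abbrev Euc (d : ℕ) := EuclideanSpace ℝ (Fin d)

/-- The cube `Q = [-1,1]^d`. -/
def cube (d : ℕ) : Set (Euc d) := {x | ∀ i, x i ∈ Set.Icc (-1 : ℝ) 1}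

/-- `K ∈ 𝒦`: `K` is a nonempty compact subset of the cube `Q = [-1,1]^d`. -/
def IsKSet (d : ℕ) (K : Set (Euc d)) : Prop :=
  K.Nonempty ∧ IsCompact K ∧ K ⊆ cube d

/-- The collection `𝒦` of nonempty compact subsets of `Q`. -/
def KColl (d : ℕ) : Set (Set (Euc d)) := {K | IsKSet d K}

/-- The zooming map `T_{x,t}(A) = {(y - x)/t : y ∈ A} ∩ Q`. -/
def zoom (d : ℕ) (x : Euc d) (t : ℝ) (A : Set (Euc d)) : Set (Euc d) :=
  ((fun y => t⁻¹ • (y - x)) '' A) ∩ cube d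

/-- `F` is a tangent set of `A` at `x`: `F ∈ 𝒦` and `T_{x,t_n}(A) → F` in the Hausdorff
distance for some sequence `t_n ↓ 0`. -/
def IsTangentSet (d : ℕ) (A : Set (Euc d)) (x : Euc d) (F : Set (Euc d)) : Prop :=
  IsKSet d F ∧ ∃ t : ℕ → ℝ, (∀ n, 0 < t n) ∧ StrictAnti t ∧ Tendsto t atTop (nhds 0) ∧
    Tendsto (fun n => hausdorffDist (zoom d x (t n) A) F) atTop (nhds 0)

/-- `Tan(A, x)`: the collection of all tangent sets of `A` at `x`. -/
def Tangents (d : ℕ) (A : Set (Euc d)) (x : Euc d) : Set (Set (Euc d)) :=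
  {F | IsTangentSet d A x F}

/-- The relation `𝒜 ≲ ℬ`: there is `λ₀ > 0` such that every `A ∈ 𝒜` has, after a
translation-and-rescaling with ratio `λ ∈ (λ₀, λ₀⁻¹)`, a matching set in `ℬ`:
`λ(A - a) = B - b` for some `B ∈ ℬ`, `a ∈ A`, `b ∈ B`. -/
def SubColl (d : ℕ) (𝒜 ℬ : Set (Set (Euc d))) : Prop :=
  ∃ lam0 : ℝ, 0 < lam0 ∧ ∀ A ∈ 𝒜, ∃ B ∈ ℬ, ∃ lam : ℝ, lam0 < lam ∧ lam < lam0⁻¹ ∧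
    ∃ a ∈ A, ∃ b ∈ B, (fun y => lam • (y - a)) '' A = (fun y => y - b) '' B

/-- The equivalence `𝒜 ≈ ℬ`, i.e. `𝒜 ≲ ℬ` and `ℬ ≲ 𝒜`. -/
def ApproxColl (d : ℕ) (𝒜 ℬ : Set (Set (Euc d))) : Prop :=
  SubColl d 𝒜 ℬ ∧ SubColl d ℬ 𝒜

/-- `E` is locally rich: `Tan(E,x) ≈ 𝒦` for every `x ∈ E`. -/
def LocallyRich (d : ℕ) (A : Set (Euc d)) : Prop :=
  ∀ x ∈ A, ApproxColl d (Tangents d A x) (KColl d)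

/-- `𝒦₀`: the nonempty compact subsets of `Q` containing the origin. -/
def KColl0 (d : ℕ) : Set (Set (Euc d)) := {K | IsKSet d K ∧ (0 : Euc d) ∈ K}

/-- `𝒦₀⁺`: the nonempty compact subsets of `Q` containing the origin and contained in the
half-space where the first coordinate is nonnegative. -/
def KColl0plus (d : ℕ) (hd : 0 < d) : Set (Set (Euc d)) :=
  {K | IsKSet d K ∧ (0 : Euc d) ∈ K ∧ ∀ x ∈ K, 0 ≤ x ⟨0, hd⟩}

/-- The local porosity `por(A,x,r)` of `A` at `x` at distance `r`. -/
noncomputable def por (d : ℕ) (A : Set (Euc d)) (x : Euc d) (r : ℝ) : ℝ :=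
  sSup {α : ℝ | 0 ≤ α ∧ ∃ y : Euc d, closedBall y (α * r) ⊆ closedBall x r \ A}

/-- coordinate bound -/
lemma coord_le_norm {d : ℕ} (z : Euc d) (i : Fin d) : |z i| ≤ ‖z‖ := by
  have h := abs_real_inner_le_norm (EuclideanSpace.single i (1:ℝ)) z
  rw [EuclideanSpace.inner_single_left, EuclideanSpace.norm_single] at h
  simpa using h

lemma cube_bounded (d : ℕ) : Bornology.IsBounded (cube d) := by
  apply (Metric.isBounded_closedBall (x := (0 : Euc d)) (r := Real.sqrt d)).subset
  intro z hz
  rw [mem_closedBall, dist_zero_right, EuclideanSpace.norm_eq]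
  apply Real.sqrt_le_sqrt
  calc ∑ i, ‖z i‖ ^ 2 ≤ ∑ _i : Fin d, (1:ℝ) := by
        apply Finset.sum_le_sum
        intro i _
        have h1 := (hz i).1; have h2 := (hz i).2
        have : ‖z i‖ ≤ 1 := by rw [Real.norm_eq_abs, abs_le]; exact ⟨h1, h2⟩
        nlinarith [norm_nonneg (z i)]
    _ = d := by simp

/-- every element of the porosity set is ≤ 1/2 -/
lemma por_set_le_half {d : ℕ} (hd : 0 < d) {E : Set (Euc d)} {x : Euc d} (hx : x ∈ E)
    {r : ℝ} (hr : 0 < r) {α : ℝ} (hα : 0 ≤ α)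
    (h : ∃ y : Euc d, closedBall y (α * r) ⊆ closedBall x r \ E) : α ≤ 1/2 := by
  obtain ⟨y, hsub⟩ := h
  by_contra hc
  push_neg at hc
  have hαr : r / 2 < α * r := by nlinarith
  have hαr0 : 0 < α * r := by nlinarith
  by_cases hyx : y = x
  · have : x ∈ closedBall y (α * r) := by
      rw [hyx]; exact mem_closedBall_self (le_of_lt hαr0)
    exact (hsub this).2 hx
  · have hnz : y - x ≠ 0 := sub_ne_zero.mpr hyx
    have hn : (0:ℝ) < ‖y - x‖ := norm_pos_iff.mpr hnz
    set w : Euc d := y + (α * r * ‖y - x‖⁻¹) • (y - x) with hw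
    have hwy : w ∈ closedBall y (α * r) := by
      rw [mem_closedBall, dist_eq_norm]
      have : w - y = (α * r * ‖y - x‖⁻¹) • (y - x) := by rw [hw]; abel
      rw [this, norm_smul]
      rw [Real.norm_eq_abs, abs_of_pos (by positivity)]
      rw [mul_assoc, inv_mul_cancel₀ (ne_of_gt hn), mul_one]
    have hwx : ‖w - x‖ = ‖y - x‖ + α * r := by
      have : w - x = (1 + α * r * ‖y - x‖⁻¹) • (y - x) := by
        rw [hw, add_smul, one_smul]; abel
      rw [this, norm_smul, Real.norm_eq_abs, abs_of_pos (by positivity)]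
      field_simp
    have hwball := hsub hwy
    have : ‖y - x‖ + α * r ≤ r := by
      have := hwball.1
      rw [mem_closedBall, dist_eq_norm] at this
      linarith [hwx ▸ this]
    have hxy : dist x y ≤ α * r := by
      rw [dist_eq_norm, ← norm_neg]
      simp only [neg_sub]
      linarith
    exact (hsub (mem_closedBall.mpr hxy)).2 hx

lemma por_bddAbove {d : ℕ} (hd : 0 < d) {E : Set (Euc d)} {x : Euc d} (hx : x ∈ E)
    {r : ℝ} (hr : 0 < r) :
    BddAbove {α : ℝ | 0 ≤ α ∧ ∃ y : Euc d, closedBall y (α * r) ⊆ closedBall x r \ E} :=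
  ⟨1/2, fun α hα => por_set_le_half hd hx hr hα.1 hα.2⟩

lemma por_le_half {d : ℕ} (hd : 0 < d) {E : Set (Euc d)} {x : Euc d} (hx : x ∈ E)
    {r : ℝ} (hr : 0 < r) : por d E x r ≤ 1/2 :=
  Real.sSup_le (fun α hα => por_set_le_half hd hx hr hα.1 hα.2) (by norm_num)


/-- If `{0}` is a tangent set of a compact `E ⊆ Q` at `x ∈ E`, then the upper porosity of
`E` at `x` equals `1/2`. -/
theorem upper_porosity_of_zero_tangent (d : ℕ) (hd : 0 < d) (E : Set (Euc d))
    (hE : IsKSet d E) (x : Euc d) (hx : x ∈ E)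
    (htan : ({(0 : Euc d)} : Set (Euc d)) ∈ Tangents d E x) :
    limsup (fun r : ℝ => por d E x r) (nhdsWithin 0 (Set.Ioi 0)) = 1 / 2 := by
  obtain ⟨-, t, htpos, -, htlim, hthaus⟩ := htan
  set l : Filter ℝ := nhdsWithin 0 (Set.Ioi 0)
  have htl : Tendsto t atTop l := by
    rw [tendsto_nhdsWithin_iff]
    exact ⟨htlim, Eventually.of_forall (fun n => htpos n)⟩
  -- key frequent lower bound
  have key : ∀ ε : ℝ, 0 < ε → ε < 1/2 → ∃ᶠ r in l, 1/2 - ε ≤ por d E x r := by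
    intro ε hε hε2
    apply htl.frequently
    apply Eventually.frequently
    have hev : ∀ᶠ n in atTop, hausdorffDist (zoom d x (t n) E) ({0} : Set (Euc d)) < ε :=
      hthaus.eventually_lt_const hε
    filter_upwards [hev] with n hn
    set r := t n with hrdef
    have hr : 0 < r := htpos n
    -- E ∩ closedBall x r ⊆ closedBall x (ε r)
    have hEsmall : ∀ y ∈ E, dist y x ≤ r → dist y x ≤ ε * r := by
      intro y hyE hyr
      set z : Euc d := r⁻¹ • (y - x) with hz
      have hznorm : ‖z‖ = dist y x / r := by
        rw [hz, norm_smul, Real.norm_eq_abs, abs_of_pos (by positivity), dist_eq_norm,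
          div_eq_inv_mul]
      have hzQ : z ∈ cube d := by
        intro i
        have h1 : |z i| ≤ ‖z‖ := coord_le_norm z i
        have h2 : ‖z‖ ≤ 1 := by
          rw [hznorm]; exact div_le_one_of_le₀ hyr (le_of_lt hr)
        constructor <;> [linarith [abs_le.mp (h1.trans h2)]; linarith [abs_le.mp (h1.trans h2)]]
      have hzmem : z ∈ zoom d x r E := ⟨⟨y, hyE, rfl⟩, hzQ⟩
      have hne : (zoom d x r E).Nonempty := ⟨z, hzmem⟩
      have hedist : EMetric.hausdorffEdist (zoom d x r E) ({0} : Set (Euc d)) ≠ ⊤ := by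
        apply Metric.hausdorffEdist_ne_top_of_nonempty_of_bounded hne (singleton_nonempty _)
        · exact (cube_bounded d).subset (Set.inter_subset_right)
        · exact Bornology.isBounded_singleton
      have := Metric.infDist_le_hausdorffDist_of_mem hzmem hedist
      rw [Metric.infDist_singleton] at this
      have hzd : dist z 0 = dist y x / r := by rw [dist_zero_right, hznorm]
      rw [hzd] at this
      have : dist y x / r < ε := lt_of_le_of_lt this hn
      calc dist y x = (dist y x / r) * r := by field_simp
        _ ≤ ε * r := by nlinarith
    -- now construct the ball
    have : (1/2 - ε) ∈ {α : ℝ | 0 ≤ α ∧ ∃ y : Euc d,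
        closedBall y (α * r) ⊆ closedBall x r \ E} := by
      refine ⟨by linarith, ?_⟩
      set e : Euc d := EuclideanSpace.single (⟨0, hd⟩ : Fin d) (1:ℝ) with he
      have hne : ‖e‖ = 1 := by rw [he, EuclideanSpace.norm_single]; simp
      refine ⟨x + ((1 + ε)/2 * r) • e, ?_⟩
      intro w hw
      rw [mem_closedBall] at hw
      have hyx : dist (x + ((1 + ε)/2 * r) • e) x = (1 + ε)/2 * r := by
        rw [dist_eq_norm]
        have : x + ((1 + ε)/2 * r) • e - x = ((1 + ε)/2 * r) • e := by abel
        rw [this, norm_smul, hne, mul_one, Real.norm_eq_abs, abs_of_pos (by positivity)]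
      have hwx_ub : dist w x ≤ r := by
        calc dist w x ≤ dist w (x + ((1 + ε)/2 * r) • e) + dist (x + ((1 + ε)/2 * r) • e) x :=
              dist_triangle _ _ _
          _ ≤ (1/2 - ε) * r + (1 + ε)/2 * r := by rw [hyx]; linarith
          _ ≤ r := by nlinarith
      have hwx_lb : ε * r < dist w x := by
        have h1 : dist (x + ((1 + ε)/2 * r) • e) x ≤
            dist (x + ((1 + ε)/2 * r) • e) w + dist w x := dist_triangle _ _ _
        rw [hyx, dist_comm _ w] at h1
        nlinarith
      refine ⟨mem_closedBall.mpr hwx_ub, ?_⟩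
      intro hwE
      have := hEsmall w hwE hwx_ub
      linarith
    have hle := le_csSup (por_bddAbove hd hx hr) this
    exact hle
  -- eventually bounded above by 1/2
  have hub : ∀ᶠ r in l, por d E x r ≤ 1/2 := by
    filter_upwards [self_mem_nhdsWithin] with r hr
    exact por_le_half hd hx hr
  have hbdd : IsBoundedUnder (· ≤ ·) l (fun r : ℝ => por d E x r) := ⟨1/2, hub⟩
  have hcob : IsCoboundedUnder (· ≤ ·) l (fun r : ℝ => por d E x r) :=
    IsCoboundedUnder.of_frequently_ge (a := (1/4 : ℝ))
      ((key (1/4) (by norm_num) (by norm_num)).mono (fun r h => by linarith))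
  apply le_antisymm
  · exact limsup_le_of_le hcob hub
  · have hL : ∀ ε : ℝ, 0 < ε → ε < 1/2 →
        1/2 - ε ≤ limsup (fun r : ℝ => por d E x r) l :=
      fun ε hε hε2 => le_limsup_of_frequently_le (key ε hε hε2) hbdd
    by_contra hc
    push_neg at hc
    have h14 := hL (1/4) (by norm_num) (by norm_num)
    set L := limsup (fun r : ℝ => por d E x r) l
    have hε : (0:ℝ) < (1/2 - L)/2 := by linarith
    have := hL ((1/2 - L)/2) hε (by linarith)
    linarith

end
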